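/- Let μ, ν be probability measures on a metric space and f : X → M be a measurable map into a metric space M with diameter β, with κ : X → A measurable such that f factors through κ. Then W₁(f_#μ, f_#ν) ≤ β · sqrt(min((1/2)·D_KL(κ_#μ‖κ_#ν), 1 − exp(−D_KL(κ_#μ‖κ_#ν)))). -/

import Mathlib

open MeasureTheory ENNReal
open scoped Classical

/-- Total variation distance: `sup_A (μ(A) - ν(A))` over measurable sets. -/
noncomputable def tvDist {X : Type*} [MeasurableSpace X] (μ ν : Measure X) : ℝ≥0∞ :=
  ⨆ (A : Set X) (_ : MeasurableSet A), μ A - ν A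

/-- 1-Wasserstein distance: infimum over couplings of the expected distance. -/
noncomputable def W1 {X : Type*} [MeasurableSpace X] [PseudoEMetricSpace X]
    (μ ν : Measure X) : ℝ≥0∞ :=
  ⨅ (π : Measure (X × X)) (_ : π.map Prod.fst = μ ∧ π.map Prod.snd = ν),
    ∫⁻ p, edist p.1 p.2 ∂π

/-- Kullback–Leibler divergence: `∫ log (dμ/dν) dμ` if `μ ≪ ν` (and the
log-likelihood ratio is integrable), `∞` otherwise. -/
noncomputable def klDiv {X : Type*} [MeasurableSpace X] (μ ν : Measure X) : ℝ≥0∞ :=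
  if μ ≪ ν ∧ Integrable (fun x => Real.log ((μ.rnDeriv ν x).toReal)) μ
  then ENNReal.ofReal (∫ x, Real.log ((μ.rnDeriv ν x).toReal) ∂μ)
  else ⊤

/-- `exp(-D)` for an extended-nonnegative-real `D`, with `exp(-∞) = 0`. -/
noncomputable def expNeg (D : ℝ≥0∞) : ℝ≥0∞ :=
  if D = ⊤ then 0 else ENNReal.ofReal (Real.exp (-D.toReal))

/-!
Since `f = g ∘ κ`, the laws of `f` are the images under `g` of the laws of `κ`. For two densities
`p, q`, keeping the common part `min p q` on the diagonal and coupling the excess masses `p - q`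
and `q - p` in any way shows `W₁ ≤ diam · TV`, and `TV` can only decrease under the measurable
map `g`. On the side of `κ`, Pinsker's inequality `TV² ≤ KL / 2` follows from the pointwise bound
`3 (y - 1)² ≤ (2 y + 4) (y log y - y + 1)` and Cauchy–Schwarz. The Bretagnolle–Huber inequality
`TV² ≤ 1 - exp (-KL)` comes from the Bhattacharyya coefficient `BC = ∫ √(dP/dQ) dQ`: Jensen's
inequality gives `BC ≥ exp (-KL / 2)`, and Cauchy–Schwarz applied to
`√r = √(min r 1 · max r 1)` gives `BC² ≤ (1 - TV) (1 + TV)`.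
-/

open Set
open InformationTheory (klFun)

lemma monotoneOn_add_one_mul_log_sub :
    MonotoneOn (fun y : ℝ => (y + 1) * Real.log y - 2 * (y - 1)) (Ioi 0) := by
  have hderiv : ∀ x : ℝ, 0 < x → HasDerivAt (fun y : ℝ => (y + 1) * Real.log y - 2 * (y - 1))
      (Real.log x + x⁻¹ - 1) x := by
    intro x hx
    refine ((((hasDerivAt_id' x).add_const 1).mul (Real.hasDerivAt_log hx.ne')).sub
      (((hasDerivAt_id' x).sub_const 1).const_mul 2)).congr_deriv ?_
    field_simp
    ring
  refine monotoneOn_of_hasDerivWithinAt_nonneg (f' := fun x => Real.log x + x⁻¹ - 1) (convex_Ioi 0)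
    (fun x hx => (hderiv x hx).continuousAt.continuousWithinAt) (fun x hx => ?_) (fun x hx => ?_)
  · rw [interior_Ioi] at hx ⊢
    exact (hderiv x hx).hasDerivWithinAt
  · rw [interior_Ioi] at hx
    have := Real.log_le_sub_one_of_pos (inv_pos.2 hx)
    rw [Real.log_inv] at this
    linarith

lemma three_mul_sq_sub_one_le_mul_klFun {y : ℝ} (hy : 0 ≤ y) :
    3 * (y - 1) ^ 2 ≤ (2 * y + 4) * klFun y := by
  set F : ℝ → ℝ := fun y => (2 * y + 4) * klFun y - 3 * (y - 1) ^ 2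
  have hF_cont : Continuous F := by
    have := InformationTheory.continuous_klFun
    fun_prop
  -- `F' = 4 G` with `G` monotone and `G 1 = 0`: `F` decreases on `[0, 1]` and increases after.
  set F' : ℝ → ℝ := fun x => 4 * ((x + 1) * Real.log x - 2 * (x - 1))
  have hF_deriv : ∀ x ≠ 0, HasDerivAt F (F' x) x := by
    intro x hx
    refine ((((hasDerivAt_id' x).const_mul 2).add_const 4).mul
      (InformationTheory.hasDerivAt_klFun hx)).sub
      ((((hasDerivAt_id' x).sub_const 1).pow 2).const_mul 3) |>.congr_deriv ?_
    rw [InformationTheory.klFun_apply]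
    push_cast
    ring
  have hG_sign : ∀ x, 0 < x → 0 ≤ (x - 1) * ((x + 1) * Real.log x - 2 * (x - 1)) := by
    intro x hx
    have hG := monotoneOn_add_one_mul_log_sub
    rcases le_total x 1 with h | h
    · have := hG hx (mem_Ioi.2 one_pos) h
      simp only [Real.log_one] at this
      nlinarith
    · have := hG (mem_Ioi.2 one_pos) hx h
      simp only [Real.log_one] at this
      nlinarith
  have hF1 : F 1 = 0 := by simp [F, InformationTheory.klFun_one]
  suffices 0 ≤ F y by simp only [F] at this; linarith
  rcases le_total y 1 with hy1 | hy1
  · have hanti : AntitoneOn F (Icc 0 1) := by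
      refine antitoneOn_of_hasDerivWithinAt_nonpos (convex_Icc 0 1) (f' := F') hF_cont.continuousOn
        (fun x hx => ?_) (fun x hx => ?_)
      · rw [interior_Icc] at hx
        exact (hF_deriv x hx.1.ne').hasDerivWithinAt
      · rw [interior_Icc] at hx
        nlinarith [hG_sign x hx.1, hx.2]
    simpa [hF1] using hanti ⟨hy, hy1⟩ ⟨zero_le_one, le_rfl⟩ hy1
  · have hmono : MonotoneOn F (Ici 1) := by
      refine monotoneOn_of_hasDerivWithinAt_nonneg (convex_Ici 1) (f' := F') hF_cont.continuousOn
        (fun x hx => ?_) (fun x hx => ?_)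
      · rw [interior_Ici] at hx
        exact (hF_deriv x (by linarith [mem_Ioi.1 hx])).hasDerivWithinAt
      · rw [interior_Ici] at hx
        nlinarith [hG_sign x (by linarith [mem_Ioi.1 hx]), mem_Ioi.1 hx]
    simpa [hF1] using hmono (mem_Ici.2 le_rfl) (mem_Ici.2 hy1) hy1

lemma ENNReal.one_sub_mul_one_add_add_sq {t : ℝ≥0∞} (ht : t ≤ 1) :
    (1 - t) * (1 + t) + t ^ 2 = 1 := by
  lift t to NNReal using ne_top_of_le_ne_top one_ne_top ht
  have ht' : t ≤ 1 := by exact_mod_cast ht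
  rw [← ENNReal.coe_one, ← ENNReal.coe_sub, ← ENNReal.coe_add, ← ENNReal.coe_mul,
    ← ENNReal.coe_pow, ← ENNReal.coe_add]
  congr 1
  apply NNReal.eq
  push_cast [ht']
  ring

lemma ENNReal.ofReal_sub_one_add_one_sub {y : ℝ} (hy : 0 ≤ y) :
    (ENNReal.ofReal y - 1) + (1 - ENNReal.ofReal y) = ENNReal.ofReal |y - 1| := by
  rcases le_total y 1 with h | h
  · rw [tsub_eq_zero_of_le (ENNReal.ofReal_le_one.2 h), zero_add, ← ENNReal.ofReal_one,
      ← ENNReal.ofReal_sub _ hy, abs_of_nonpos (by linarith), neg_sub]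
  · rw [tsub_eq_zero_of_le (ENNReal.one_le_ofReal.2 h), add_zero, ← ENNReal.ofReal_one,
      ← ENNReal.ofReal_sub _ zero_le_one, abs_of_nonneg (by linarith)]

lemma ENNReal.mul_ofReal_exp_neg_log_toReal_div_two {r : ℝ≥0∞} (hr : r ≠ ⊤) :
    r * ENNReal.ofReal (Real.exp (-Real.log r.toReal / 2)) = r ^ (1 / 2 : ℝ) := by
  rcases eq_or_ne r 0 with rfl | hr0
  · simp
  have hy : 0 < r.toReal := ENNReal.toReal_pos hr0 hr
  have h_exp : Real.exp (-Real.log r.toReal / 2) = r.toReal ^ (-1 / 2 : ℝ) := by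
    rw [Real.rpow_def_of_pos hy]
    ring_nf
  rw [h_exp]
  nth_rw 1 [← ENNReal.ofReal_toReal hr]
  rw [← ENNReal.ofReal_mul hy.le, ← Real.rpow_one_add' hy.le (by norm_num),
    ← ENNReal.ofReal_rpow_of_pos hy, ENNReal.ofReal_toReal hr]
  norm_num

lemma lintegral_sq_le_mul_of_sq_le {α : Type*} [MeasurableSpace α] {μ : Measure α}
    {f g h : α → ℝ≥0∞} (hf : AEMeasurable f μ) (hg : AEMeasurable g μ)
    (hfgh : ∀ᵐ x ∂μ, h x ^ 2 ≤ f x * g x) :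
    (∫⁻ x, h x ∂μ) ^ 2 ≤ (∫⁻ x, f x ∂μ) * ∫⁻ x, g x ∂μ := by
  have hsq : ∀ a b : ℝ≥0∞, a ≤ b ^ (1 / 2 : ℝ) ↔ a ^ 2 ≤ b := fun a b => by
    rw [one_div, ENNReal.le_rpow_inv_iff two_pos, ← ENNReal.rpow_natCast]; norm_num
  have hsqrt : ∀ a : ℝ≥0∞, (a ^ (1 / 2 : ℝ)) ^ (2 : ℝ) = a := fun a => by
    rw [← ENNReal.rpow_mul]; norm_num
  have hh : ∫⁻ x, h x ∂μ ≤
      ∫⁻ x, ((fun x => f x ^ (1 / 2 : ℝ)) * fun x => g x ^ (1 / 2 : ℝ)) x ∂μ := by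
    refine lintegral_mono_ae (hfgh.mono fun x hx => ?_)
    rw [Pi.mul_apply, ← ENNReal.mul_rpow_of_nonneg _ _ (by norm_num), hsq]
    exact hx
  have hcs := hh.trans (ENNReal.lintegral_mul_le_Lp_mul_Lq μ Real.HolderConjugate.two_two
    (hf.pow_const _) (hg.pow_const _))
  simp only [hsqrt] at hcs
  rwa [← ENNReal.mul_rpow_of_nonneg _ _ (by norm_num), hsq] at hcs

lemma ofReal_exp_integral_le_lintegral {α : Type*} [MeasurableSpace α] {μ : Measure α}
    [IsProbabilityMeasure μ] {f : α → ℝ} (hf : Integrable f μ) :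
    ENNReal.ofReal (Real.exp (∫ x, f x ∂μ)) ≤ ∫⁻ x, ENNReal.ofReal (Real.exp (f x)) ∂μ := by
  by_cases h_exp : Integrable (fun x => Real.exp (f x)) μ
  · rw [← ofReal_integral_eq_lintegral_ofReal h_exp (ae_of_all _ fun x => (Real.exp_pos _).le)]
    exact ENNReal.ofReal_le_ofReal (convexOn_exp.map_integral_le Real.continuous_exp.continuousOn
      isClosed_univ (ae_of_all _ fun _ => mem_univ _) hf h_exp)
  · rw [not_not.1 ((lintegral_ofReal_ne_top_iff_integrable
      (Real.continuous_exp.comp_aestronglyMeasurable hf.1)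
      (ae_of_all _ fun x => (Real.exp_pos _).le)).not.2 h_exp)]
    exact le_top

section TotalVariation

variable {α : Type*} [MeasurableSpace α]

lemma lintegral_tsub_comm_of_lintegral_eq {μ : Measure α} {f g : α → ℝ≥0∞}
    (hf : Measurable f) (hg : Measurable g)
    (h : ∫⁻ x, f x ∂μ = ∫⁻ x, g x ∂μ) (hfin : ∫⁻ x, f x ∂μ ≠ ⊤) :
    ∫⁻ x, (f x - g x) ∂μ = ∫⁻ x, (g x - f x) ∂μ := by
  have hsplit : ∀ u v : α → ℝ≥0∞, Measurable u → Measurable v →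
      ∫⁻ x, u x ∂μ = ∫⁻ x, (u x - v x) ∂μ + ∫⁻ x, min (u x) (v x) ∂μ := fun u v hu hv => by
    rw [← lintegral_add_right _ (hu.min hv)]
    simp_rw [tsub_add_min]
  have hmin_fin : ∫⁻ x, min (f x) (g x) ∂μ ≠ ⊤ :=
    ne_top_of_le_ne_top hfin (lintegral_mono fun x => min_le_left _ _)
  have hfg := hsplit f g hf hg
  rw [h, hsplit g f hg hf] at hfg
  simp_rw [min_comm (g _)] at hfg
  exact ((ENNReal.add_left_inj hmin_fin).1 hfg).symm

lemma tvDist_withDensity {ρ : Measure α} {p q : α → ℝ≥0∞}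
    (hp : Measurable p) (hq : Measurable q) (hq_fin : ∫⁻ x, q x ∂ρ ≠ ⊤) :
    tvDist (ρ.withDensity p) (ρ.withDensity q) = ∫⁻ x, (p x - q x) ∂ρ := by
  apply le_antisymm
  · refine iSup₂_le fun A hA => ?_
    rw [withDensity_apply _ hA, withDensity_apply _ hA, tsub_le_iff_right]
    calc ∫⁻ x in A, p x ∂ρ ≤ ∫⁻ x in A, ((p x - q x) + q x) ∂ρ :=
          lintegral_mono fun x => le_tsub_add
      _ = ∫⁻ x in A, (p x - q x) ∂ρ + ∫⁻ x in A, q x ∂ρ := lintegral_add_left (hp.sub hq) _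
      _ ≤ ∫⁻ x, (p x - q x) ∂ρ + ∫⁻ x in A, q x ∂ρ :=
          add_le_add_left (setLIntegral_le_lintegral _ _) _
  · -- the supremum is attained on `{q < p}`
    set A := {x | q x < p x}
    have hA : MeasurableSet A := measurableSet_lt hq hp
    have h_on_A : ∫⁻ x, (p x - q x) ∂ρ = ∫⁻ x in A, (p x - q x) ∂ρ := by
      rw [← lintegral_add_compl _ hA, setLIntegral_congr_fun hA.compl
        (fun x hx => tsub_eq_zero_of_le (not_lt.1 hx)), lintegral_zero, add_zero]
    have hpA : ∫⁻ x in A, p x ∂ρ = ∫⁻ x in A, (p x - q x) ∂ρ + ∫⁻ x in A, q x ∂ρ := by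
      rw [← lintegral_add_right _ hq]
      exact setLIntegral_congr_fun hA fun x hx => (tsub_add_cancel_of_le (le_of_lt hx)).symm
    refine le_trans ?_ (le_iSup₂ (f := fun A (_ : MeasurableSet A) =>
      ρ.withDensity p A - ρ.withDensity q A) A hA)
    rw [withDensity_apply _ hA, withDensity_apply _ hA, hpA, h_on_A,
      ENNReal.add_sub_cancel_right (ne_top_of_le_ne_top hq_fin (setLIntegral_le_lintegral _ _))]

lemma tvDist_le_measure_univ (μ ν : Measure α) : tvDist μ ν ≤ μ univ :=
  iSup₂_le fun A _ => tsub_le_self.trans (measure_mono (subset_univ A))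

lemma tvDist_map_le {β : Type*} [MeasurableSpace β] (μ ν : Measure α) {g : α → β}
    (hg : Measurable g) : tvDist (μ.map g) (ν.map g) ≤ tvDist μ ν := by
  refine iSup₂_le fun A hA => ?_
  rw [Measure.map_apply hg hA, Measure.map_apply hg hA]
  exact le_iSup₂ (f := fun A (_ : MeasurableSet A) => μ A - ν A) (g ⁻¹' A) (hg hA)

lemma withDensity_min_add_withDensity_tsub {ρ : Measure α} {p q : α → ℝ≥0∞}
    (hp : Measurable p) (hq : Measurable q) :
    ρ.withDensity (fun x => min (p x) (q x)) + ρ.withDensity (fun x => p x - q x) =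
      ρ.withDensity p := by
  rw [← withDensity_add_left (hp.min hq)]
  congr 1
  funext x
  exact (add_comm _ _).trans tsub_add_min

end TotalVariation

lemma exists_coupling_of_measure_univ_eq {X Y : Type*} [MeasurableSpace X] [MeasurableSpace Y]
    {μ : Measure X} {ν : Measure Y} [IsFiniteMeasure μ] [IsFiniteMeasure ν]
    (h : μ univ = ν univ) :
    ∃ ξ : Measure (X × Y), ξ.map Prod.fst = μ ∧ ξ.map Prod.snd = ν ∧ ξ univ = μ univ := by
  rcases eq_or_ne (μ univ) 0 with h0 | h0
  · have hν : ν univ = 0 := h ▸ h0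
    exact ⟨0, by simp [Measure.measure_univ_eq_zero.1 h0],
      by simp [Measure.measure_univ_eq_zero.1 hν], by simp [h0]⟩
  · refine ⟨(μ univ)⁻¹ • μ.prod ν, ?_, ?_, ?_⟩
    · rw [Measure.map_smul, Measure.map_fst_prod, smul_smul, ← h,
        ENNReal.inv_mul_cancel h0 (measure_ne_top _ _), one_smul]
    · rw [Measure.map_smul, Measure.map_snd_prod, smul_smul,
        ENNReal.inv_mul_cancel h0 (measure_ne_top _ _), one_smul]
    · rw [Measure.smul_apply, ← univ_prod_univ, Measure.prod_prod, ← h, smul_eq_mul, ← mul_assoc,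
        ENNReal.inv_mul_cancel h0 (measure_ne_top _ _), one_mul]

section Wasserstein

variable {M : Type*} [MeasurableSpace M] [PseudoEMetricSpace M]

lemma W1_le_lintegral_edist {μ ν : Measure M} (π : Measure (M × M))
    (h₁ : π.map Prod.fst = μ) (h₂ : π.map Prod.snd = ν) : W1 μ ν ≤ ∫⁻ z, edist z.1 z.2 ∂π :=
  iInf₂_le π ⟨h₁, h₂⟩

lemma W1_withDensity_le {ρ : Measure M} {p q : M → ℝ≥0∞} (hp : Measurable p) (hq : Measurable q)
    (h_eq : ∫⁻ x, p x ∂ρ = ∫⁻ x, q x ∂ρ) (h_fin : ∫⁻ x, p x ∂ρ ≠ ⊤) :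
    W1 (ρ.withDensity p) (ρ.withDensity q) ≤
      Metric.ediam (univ : Set M) * ∫⁻ x, (p x - q x) ∂ρ := by
  -- Leave the common part `min p q` in place and move the excess `p - q` onto `q - p`.
  set common := ρ.withDensity fun x => min (p x) (q x)
  set excess_p := ρ.withDensity fun x => p x - q x
  set excess_q := ρ.withDensity fun x => q x - p x
  have h_excess_p : excess_p univ = ∫⁻ x, (p x - q x) ∂ρ := by
    rw [withDensity_apply _ MeasurableSet.univ, Measure.restrict_univ]
  have h_excess_q : excess_q univ = ∫⁻ x, (p x - q x) ∂ρ := by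
    rw [withDensity_apply _ MeasurableSet.univ, Measure.restrict_univ,
      lintegral_tsub_comm_of_lintegral_eq hp hq h_eq h_fin]
  have : IsFiniteMeasure excess_p := isFiniteMeasure_withDensity
    (ne_top_of_le_ne_top h_fin (lintegral_mono fun _ => tsub_le_self))
  have : IsFiniteMeasure excess_q := isFiniteMeasure_withDensity
    (ne_top_of_le_ne_top (h_eq ▸ h_fin) (lintegral_mono fun _ => tsub_le_self))
  obtain ⟨ξ, hξ₁, hξ₂, hξ⟩ :=
    exists_coupling_of_measure_univ_eq (h_excess_p.trans h_excess_q.symm)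
  have h_diag : Measurable fun x : M => (x, x) := measurable_id.prodMk measurable_id
  have h_common : ∀ i : M × M → M, Measurable i → (∀ x, i (x, x) = x) →
      (common.map fun x => (x, x)).map i = common := fun i hi hix => by
    rw [Measure.map_map hi h_diag]
    convert Measure.map_id
    exact funext hix
  calc W1 (ρ.withDensity p) (ρ.withDensity q)
      ≤ ∫⁻ z, edist z.1 z.2 ∂(common.map (fun x => (x, x)) + ξ) := by
        refine W1_le_lintegral_edist _ ?_ ?_
        · rw [Measure.map_add _ _ measurable_fst, h_common _ measurable_fst fun _ => rfl, hξ₁,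
            withDensity_min_add_withDensity_tsub hp hq]
        · rw [Measure.map_add _ _ measurable_snd, h_common _ measurable_snd fun _ => rfl, hξ₂]
          simp_rw [common, min_comm (p _)]
          exact withDensity_min_add_withDensity_tsub hq hp
    _ ≤ 0 + ∫⁻ z, Metric.ediam (univ : Set M) ∂ξ := by
        rw [lintegral_add_measure]
        gcongr with z
        · exact (lintegral_map_le _ _).trans (by simp)
        · exact Metric.edist_le_ediam_of_mem (mem_univ _) (mem_univ _)
    _ = Metric.ediam (univ : Set M) * ∫⁻ x, (p x - q x) ∂ρ := by
        rw [zero_add, lintegral_const, hξ, h_excess_p]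

theorem W1_le_diam_mul_tvDist (P Q : Measure M) [IsFiniteMeasure P] [IsFiniteMeasure Q]
    (h : P univ = Q univ) : W1 P Q ≤ Metric.ediam (univ : Set M) * tvDist P Q := by
  have hP : P ≪ P + Q := Measure.absolutelyContinuous_of_le (Measure.le_add_right le_rfl)
  have hQ : Q ≪ P + Q := Measure.absolutelyContinuous_of_le (Measure.le_add_left le_rfl)
  have key := W1_withDensity_le (Measure.measurable_rnDeriv P (P + Q))
    (Measure.measurable_rnDeriv Q (P + Q))
    (by rw [Measure.lintegral_rnDeriv hP, Measure.lintegral_rnDeriv hQ, h])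
    (by rw [Measure.lintegral_rnDeriv hP]; exact measure_ne_top _ _)
  rwa [← tvDist_withDensity (Measure.measurable_rnDeriv _ _) (Measure.measurable_rnDeriv _ _)
      (by rw [Measure.lintegral_rnDeriv hQ]; exact measure_ne_top _ _),
    Measure.withDensity_rnDeriv_eq _ _ hP, Measure.withDensity_rnDeriv_eq _ _ hQ] at key

end Wasserstein

section Divergences

variable {α : Type*} [MeasurableSpace α]

lemma klDiv_eq_informationTheory_klDiv (P Q : Measure α) [IsProbabilityMeasure P]
    [IsProbabilityMeasure Q] : klDiv P Q = InformationTheory.klDiv P Q := by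
  rw [klDiv, InformationTheory.klDiv_def]
  simp only [probReal_univ, add_sub_cancel_right]
  rfl

lemma tvDist_eq_lintegral_rnDeriv_tsub_one {P Q : Measure α} [IsProbabilityMeasure P]
    [IsProbabilityMeasure Q] (h : P ≪ Q) : tvDist P Q = ∫⁻ x, (P.rnDeriv Q x - 1) ∂Q := by
  have key := tvDist_withDensity (ρ := Q) (Measure.measurable_rnDeriv P Q) measurable_const
    (q := 1) (by simp)
  rwa [Measure.withDensity_rnDeriv_eq P Q h, withDensity_one] at key

lemma tvDist_eq_lintegral_one_tsub_rnDeriv {P Q : Measure α} [IsProbabilityMeasure P]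
    [IsProbabilityMeasure Q] (h : P ≪ Q) : tvDist P Q = ∫⁻ x, (1 - P.rnDeriv Q x) ∂Q := by
  rw [tvDist_eq_lintegral_rnDeriv_tsub_one h]
  exact lintegral_tsub_comm_of_lintegral_eq (Measure.measurable_rnDeriv P Q) measurable_const
    (by simp [Measure.lintegral_rnDeriv h]) (by simp [Measure.lintegral_rnDeriv h])

theorem tvDist_sq_le_klDiv_div_two (P Q : Measure α) [IsProbabilityMeasure P]
    [IsProbabilityMeasure Q] : tvDist P Q ^ 2 ≤ klDiv P Q / 2 := by
  by_cases hPQ : P ≪ Q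
  swap
  · simp [klDiv_eq_informationTheory_klDiv, hPQ, ENNReal.top_div_of_ne_top]
  set r := P.rnDeriv Q
  have hr : Measurable r := Measure.measurable_rnDeriv P Q
  have h_abs : ∫⁻ x, ((r x - 1) + (1 - r x)) ∂Q = 2 * tvDist P Q := by
    rw [lintegral_add_left (f := fun x => r x - 1) (hr.sub measurable_const),
      ← tvDist_eq_lintegral_rnDeriv_tsub_one hPQ, ← tvDist_eq_lintegral_one_tsub_rnDeriv hPQ,
      two_mul]
  have h_weight : ∫⁻ x, ENNReal.ofReal ((2 * (r x).toReal + 4) / 3) ∂Q = 2 := by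
    rw [← ofReal_integral_eq_lintegral_ofReal (f := fun x => (2 * (r x).toReal + 4) / 3)
      (((Measure.integrable_toReal_rnDeriv.const_mul 2).add (integrable_const 4)).div_const 3)
      (ae_of_all _ fun x => show (0 : ℝ) ≤ _ by positivity)]
    rw [integral_div, integral_add (Measure.integrable_toReal_rnDeriv.const_mul 2)
      (integrable_const 4), integral_const_mul, Measure.integral_toReal_rnDeriv hPQ]
    norm_num
  have h_pt : ∀ᵐ x ∂Q, ((r x - 1) + (1 - r x)) ^ 2 ≤
      ENNReal.ofReal ((2 * (r x).toReal + 4) / 3) * ENNReal.ofReal (klFun (r x).toReal) := by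
    filter_upwards [show ∀ᵐ x ∂Q, r x < ⊤ from Measure.rnDeriv_lt_top P Q] with x hx
    have hy : 0 ≤ (r x).toReal := ENNReal.toReal_nonneg
    rw [← ENNReal.ofReal_toReal hx.ne, ENNReal.ofReal_sub_one_add_one_sub hy,
      ENNReal.toReal_ofReal hy, ← ENNReal.ofReal_pow (abs_nonneg _),
      ← ENNReal.ofReal_mul (by positivity), sq_abs]
    refine ENNReal.ofReal_le_ofReal ?_
    have := three_mul_sq_sub_one_le_mul_klFun hy
    rw [div_mul_eq_mul_div, le_div_iff₀ (by norm_num)]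
    linarith
  have hcs := lintegral_sq_le_mul_of_sq_le (by fun_prop) (by fun_prop) h_pt
  rw [h_abs, h_weight, ← InformationTheory.klDiv_eq_lintegral_klFun_of_ac hPQ,
    ← klDiv_eq_informationTheory_klDiv] at hcs
  rw [ENNReal.le_div_iff_mul_le (Or.inl two_ne_zero) (Or.inl ENNReal.ofNat_ne_top)]
  refine (ENNReal.mul_le_mul_iff_right (a := 2) two_ne_zero ENNReal.ofNat_ne_top).1 ?_
  calc 2 * (tvDist P Q ^ 2 * 2) = (2 * tvDist P Q) ^ 2 := by ring
    _ ≤ 2 * klDiv P Q := hcs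

noncomputable def bhattacharyya (P Q : Measure α) : ℝ≥0∞ :=
  ∫⁻ x, P.rnDeriv Q x ^ (1 / 2 : ℝ) ∂Q

lemma bhattacharyya_sq_add_tvDist_sq_le_one {P Q : Measure α} [IsProbabilityMeasure P]
    [IsProbabilityMeasure Q] (h : P ≪ Q) : bhattacharyya P Q ^ 2 + tvDist P Q ^ 2 ≤ 1 := by
  have hr : Measurable (P.rnDeriv Q) := Measure.measurable_rnDeriv P Q
  have ht : tvDist P Q ≤ 1 := (tvDist_le_measure_univ P Q).trans_eq measure_univ
  have h_min : ∫⁻ x, min (P.rnDeriv Q x) 1 ∂Q = 1 - tvDist P Q := by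
    refine ENNReal.eq_sub_of_add_eq (ne_top_of_le_ne_top one_ne_top ht) ?_
    rw [tvDist_eq_lintegral_one_tsub_rnDeriv h, ← lintegral_add_left (hr.min measurable_const)]
    simp_rw [min_comm (P.rnDeriv Q _), add_comm (min _ _), tsub_add_min]
    simp
  have h_max : ∫⁻ x, max (P.rnDeriv Q x) 1 ∂Q = 1 + tvDist P Q := by
    simp_rw [← tsub_add_eq_max]
    rw [lintegral_add_left (f := fun x => P.rnDeriv Q x - 1) (hr.sub measurable_const),
      ← tvDist_eq_lintegral_rnDeriv_tsub_one h, lintegral_const, measure_univ, mul_one, add_comm]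
  have hcs := lintegral_sq_le_mul_of_sq_le (μ := Q) (h := fun x => P.rnDeriv Q x ^ (1 / 2 : ℝ))
    (hr.min measurable_const).aemeasurable (hr.max measurable_const).aemeasurable
    (ae_of_all _ fun x => by
      rw [min_mul_max, mul_one, ← ENNReal.rpow_natCast, ← ENNReal.rpow_mul]
      norm_num)
  rw [h_min, h_max] at hcs
  calc bhattacharyya P Q ^ 2 + tvDist P Q ^ 2
      ≤ (1 - tvDist P Q) * (1 + tvDist P Q) + tvDist P Q ^ 2 := add_le_add_left hcs _
    _ = 1 := ENNReal.one_sub_mul_one_add_add_sq ht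

lemma ofReal_exp_neg_integral_llr_div_two_le_bhattacharyya {P Q : Measure α}
    [IsProbabilityMeasure P] [SigmaFinite Q] (h : P ≪ Q) (h_int : Integrable (llr P Q) P) :
    ENNReal.ofReal (Real.exp (-(∫ x, llr P Q x ∂P) / 2)) ≤ bhattacharyya P Q := by
  calc ENNReal.ofReal (Real.exp (-(∫ x, llr P Q x ∂P) / 2))
      = ENNReal.ofReal (Real.exp (∫ x, -llr P Q x / 2 ∂P)) := by
        rw [integral_div, integral_neg]
    _ ≤ ∫⁻ x, ENNReal.ofReal (Real.exp (-llr P Q x / 2)) ∂P :=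
        ofReal_exp_integral_le_lintegral (h_int.neg.div_const 2)
    _ = ∫⁻ x, P.rnDeriv Q x * ENNReal.ofReal (Real.exp (-llr P Q x / 2)) ∂Q :=
        (lintegral_rnDeriv_mul h (by fun_prop)).symm
    _ = bhattacharyya P Q := by
        refine lintegral_congr_ae ?_
        filter_upwards [Measure.rnDeriv_lt_top P Q] with x hx
        exact ENNReal.mul_ofReal_exp_neg_log_toReal_div_two hx.ne

theorem tvDist_sq_le_one_sub_expNeg_klDiv (P Q : Measure α) [IsProbabilityMeasure P]
    [IsProbabilityMeasure Q] : tvDist P Q ^ 2 ≤ 1 - expNeg (klDiv P Q) := by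
  rw [klDiv_eq_informationTheory_klDiv]
  by_cases h : P ≪ Q ∧ Integrable (llr P Q) P
  · have hk : 0 ≤ ∫ x, llr P Q x ∂P := by
      simpa using InformationTheory.integral_llr_add_sub_measure_univ_nonneg h.1 h.2
    have h_exp : expNeg (InformationTheory.klDiv P Q) =
        ENNReal.ofReal (Real.exp (-∫ x, llr P Q x ∂P)) := by
      rw [InformationTheory.klDiv_of_ac_of_integrable h.1 h.2, expNeg,
        if_neg ENNReal.ofReal_ne_top]
      simp [hk]
    rw [h_exp]
    refine ENNReal.le_sub_of_add_le_left ENNReal.ofReal_ne_top ?_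
    calc ENNReal.ofReal (Real.exp (-∫ x, llr P Q x ∂P)) + tvDist P Q ^ 2
        = ENNReal.ofReal (Real.exp (-(∫ x, llr P Q x ∂P) / 2)) ^ 2 + tvDist P Q ^ 2 := by
          rw [← ENNReal.ofReal_pow (Real.exp_pos _).le, ← Real.exp_nat_mul]
          ring_nf
      _ ≤ bhattacharyya P Q ^ 2 + tvDist P Q ^ 2 := by
          gcongr
          exact ofReal_exp_neg_integral_llr_div_two_le_bhattacharyya h.1 h.2
      _ ≤ 1 := bhattacharyya_sq_add_tvDist_sq_le_one h.1
  · rw [InformationTheory.klDiv_eq_top_iff.2 fun h₁ h₂ => h ⟨h₁, h₂⟩, expNeg, if_pos rfl,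
      tsub_zero]
    exact pow_le_one₀ zero_le ((tvDist_le_measure_univ P Q).trans_eq measure_univ)

theorem tvDist_le_rpow_min_klDiv (P Q : Measure α) [IsProbabilityMeasure P]
    [IsProbabilityMeasure Q] :
    tvDist P Q ≤ (min (klDiv P Q / 2) (1 - expNeg (klDiv P Q))) ^ (1 / 2 : ℝ) := by
  rw [one_div, ENNReal.le_rpow_inv_iff two_pos, ENNReal.rpow_two]
  exact le_min (tvDist_sq_le_klDiv_div_two P Q) (tvDist_sq_le_one_sub_expNeg_klDiv P Q)

end Divergences

theorem W1_pushforward_bound_general {X A M : Type*} [MeasurableSpace X] [MeasurableSpace A]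
    [MetricSpace M] [MeasurableSpace M]
    (β : ℝ≥0∞) (hβ : EMetric.diam (Set.univ : Set M) = β)
    (f : X → M) (κ : X → A) (g : A → M)
    (hκ : Measurable κ) (hg : Measurable g) (hfac : f = g ∘ κ)
    (μ ν : Measure X) [IsProbabilityMeasure μ] [IsProbabilityMeasure ν] :
    W1 (μ.map f) (ν.map f) ≤
      β * (min (klDiv (μ.map κ) (ν.map κ) / 2)
               (1 - expNeg (klDiv (μ.map κ) (ν.map κ)))) ^ (1/2 : ℝ) := by
  subst hfac hβ
  have := Measure.isProbabilityMeasure_map (μ := μ) hκ.aemeasurable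
  have := Measure.isProbabilityMeasure_map (μ := ν) hκ.aemeasurable
  have := Measure.isProbabilityMeasure_map (μ := μ.map κ) hg.aemeasurable
  have := Measure.isProbabilityMeasure_map (μ := ν.map κ) hg.aemeasurable
  rw [← Measure.map_map hg hκ, ← Measure.map_map hg hκ]
  calc W1 ((μ.map κ).map g) ((ν.map κ).map g)
      ≤ Metric.ediam (univ : Set M) * tvDist ((μ.map κ).map g) ((ν.map κ).map g) :=
        W1_le_diam_mul_tvDist _ _ (by simp)
    _ ≤ Metric.ediam (univ : Set M) * tvDist (μ.map κ) (ν.map κ) :=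
        mul_le_mul_right (tvDist_map_le _ _ hg) _
    _ ≤ _ := mul_le_mul_right (tvDist_le_rpow_min_klDiv _ _) _

/-- If f factors through κ, the Wasserstein distance of pushforwards under f is
bounded via the KL divergence of pushforwards under κ. -/
theorem W1_pushforward_bound {X A M : Type*} [MeasurableSpace X] [MeasurableSpace A]
    [MetricSpace M] [MeasurableSpace M]
    (β : ℝ≥0∞) (hfin : β ≠ ⊤) (hβ : EMetric.diam (Set.univ : Set M) = β)
    (f : X → M) (κ : X → A) (g : A → M)
    (hf : Measurable f) (hκ : Measurable κ) (hg : Measurable g) (hfac : f = g ∘ κ)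
    (μ ν : Measure X) [IsProbabilityMeasure μ] [IsProbabilityMeasure ν] :
    W1 (μ.map f) (ν.map f) ≤
      β * (min (klDiv (μ.map κ) (ν.map κ) / 2)
               (1 - expNeg (klDiv (μ.map κ) (ν.map κ)))) ^ (1/2 : ℝ) :=
  W1_pushforward_bound_general β hβ f κ g hκ hg hfac μ ν
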